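/- Let N, a, b be positive integers and for each i ∈ Fin b, j ∈ Fin a let v_{ij} : ZMod N × ZMod N → ℂ. Let U be the complex matrix with rows indexed by Fin b × (ZMod N × ZMod N) and columns indexed by Fin a × (ZMod N × ZMod N) whose (i,j) block is the 2d circulant matrix of v_{ij} (entry v_{ij}(m − n) in position (n,m)). For each frequency pair n = (n₁,n₂) ∈ (ZMod N)², let B̃_n be the b × a matrix with entries (B̃_n)_{ij} = Σ_{k₁=0}^{N−1} Σ_{k₂=0}^{N−1} exp(−2πi(k₁n₁ + k₂n₂)/N) · v_{ij}(k₁,k₂). Then ‖U‖₂ = max_{n ∈ (ZMod N)²} ‖B̃_n‖₂. -/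

import Mathlib

open scoped Real

/-- The spectral norm (largest singular value, i.e. the `ℓ₂ → ℓ₂` operator norm)
of a rectangular matrix. -/
noncomputable def matSpectralNorm {𝕜 : Type*} [RCLike 𝕜] {m n : Type*} [Fintype m] [Fintype n]
    [DecidableEq n] (A : Matrix m n 𝕜) : ℝ :=
  ‖LinearMap.toContinuousLinearMap (Matrix.toEuclideanLin A)‖

set_option linter.unusedSectionVars false
set_option maxHeartbeats 1000000

namespace Stmt7Aux

open Complex Matrix Finset

noncomputable def psi (N : ℕ) (x : ZMod N) : ℂ :=
  Complex.exp (2 * π * Complex.I * x.val / N)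

section Character
variable {N : ℕ} [NeZero N]





lemma psi_natCast (m : ℕ) :
    Complex.exp (2 * π * Complex.I * m / N) = psi N (m : ZMod N) := by
  have hN : (N : ℂ) ≠ 0 := Nat.cast_ne_zero.2 (NeZero.ne N)
  rw [psi, ZMod.val_natCast]
  conv_lhs => rw [← Nat.div_add_mod m N]
  have h1 : ((N * (m / N) + m % N : ℕ) : ℂ) = (N : ℂ) * ((m / N : ℕ) : ℂ) + ((m % N : ℕ) : ℂ) := by
    push_cast; ring
  rw [h1, show 2 * (π : ℂ) * Complex.I * ((N : ℂ) * ((m / N : ℕ) : ℂ) + ((m % N : ℕ) : ℂ)) / N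
      = ((m / N : ℕ) : ℂ) * (2 * (π : ℂ) * Complex.I)
        + 2 * (π : ℂ) * Complex.I * ((m % N : ℕ) : ℂ) / N by
    field_simp]
  rw [Complex.exp_add,
    show ((m / N : ℕ) : ℂ) * (2 * (π : ℂ) * Complex.I)
      = (((m / N : ℕ) : ℤ) : ℂ) * (2 * (π : ℂ) * Complex.I) by rw [Int.cast_natCast],
    Complex.exp_int_mul_two_pi_mul_I, one_mul]

lemma psi_zero : psi N 0 = 1 := by
  simp [psi]

lemma psi_add (x y : ZMod N) : psi N (x + y) = psi N x * psi N y := by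
  have h1 : ((x.val + y.val : ℕ) : ZMod N) = x + y := by
    push_cast
    simp [ZMod.natCast_val, ZMod.cast_id]
  have h2 := psi_natCast (N := N) (x.val + y.val)
  rw [h1] at h2
  rw [← h2, psi, psi, ← Complex.exp_add]
  congr 1
  have hN : (N : ℂ) ≠ 0 := Nat.cast_ne_zero.2 (NeZero.ne N)
  push_cast
  field_simp

lemma psi_nsmul (n : ℕ) (x : ZMod N) : psi N (n • x) = psi N x ^ n := by
  induction n with
  | zero => simp [psi_zero]
  | succ k ih => rw [succ_nsmul, psi_add, ih, pow_succ]

lemma psi_ne_one {c : ZMod N} (hc : c ≠ 0) : psi N c ≠ 1 := by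
  have hprim := Complex.isPrimitiveRoot_exp N (NeZero.ne N)
  have h : psi N c = Complex.exp (2 * π * Complex.I / N) ^ c.val := by
    rw [← Complex.exp_nat_mul, psi]
    congr 1
    ring
  rw [h, Ne, hprim.pow_eq_one_iff_dvd]
  intro hdvd
  have hlt := ZMod.val_lt c
  have : c.val = 0 := Nat.eq_zero_of_dvd_of_lt hdvd hlt
  exact hc ((ZMod.val_eq_zero c).mp this)






lemma psi_ne_zero (x : ZMod N) : psi N x ≠ 0 := Complex.exp_ne_zero _

lemma psi_neg (x : ZMod N) : psi N (-x) = (starRingEnd ℂ) (psi N x) := by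
  have h : psi N (-x) * psi N x = 1 := by rw [← psi_add, neg_add_cancel, psi_zero]
  have hc : (starRingEnd ℂ) (2 * (π : ℂ) * Complex.I * (x.val : ℂ) / N)
      = -(2 * (π : ℂ) * Complex.I * (x.val : ℂ) / N) := by
    simp only [map_div₀, _root_.map_mul, map_ofNat, Complex.conj_I, Complex.conj_ofReal,
      map_natCast]
    ring
  have h2 : (starRingEnd ℂ) (psi N x) * psi N x = 1 := by
    rw [psi, ← Complex.exp_conj, hc, ← Complex.exp_add, neg_add_cancel, Complex.exp_zero]
  exact mul_right_cancel₀ (psi_ne_zero x) (h.trans h2.symm)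

lemma sum_zmod (g : ZMod N → ℂ) :
    ∑ j ∈ Finset.range N, g ((j : ℕ) : ZMod N) = ∑ x : ZMod N, g x := by
  rw [← Fin.sum_univ_eq_sum_range (fun j => g ((j : ℕ) : ZMod N))]
  refine Fintype.sum_bijective (fun j : Fin N => ((j : ℕ) : ZMod N)) ?_ _ _ (fun x => rfl)
  constructor
  · intro j k h
    have hj : (((j : ℕ) : ZMod N)).val = (j : ℕ) := by
      rw [ZMod.val_natCast]; exact Nat.mod_eq_of_lt j.isLt
    have hk : (((k : ℕ) : ZMod N)).val = (k : ℕ) := by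
      rw [ZMod.val_natCast]; exact Nat.mod_eq_of_lt k.isLt
    exact Fin.ext (by rw [← hj, ← hk]; exact congrArg ZMod.val h)
  · intro x
    exact ⟨⟨x.val, x.val_lt⟩, by simp [ZMod.natCast_val, ZMod.cast_id]⟩

lemma sum_psi_mul (c : ZMod N) :
    ∑ x : ZMod N, psi N (x * c) = if c = 0 then (N : ℂ) else 0 := by
  split_ifs with hc
  · subst hc
    simp [psi_zero, Finset.card_univ]
  · rw [← sum_zmod (fun x => psi N (x * c))]
    have hpow : ∀ j : ℕ, psi N (((j : ℕ) : ZMod N) * c) = psi N c ^ j := fun j => by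
      rw [← nsmul_eq_mul, psi_nsmul]
    simp_rw [hpow]
    rw [geom_sum_eq (psi_ne_one hc)]
    have hNc : (N : ℕ) • c = 0 := by
      simp [nsmul_eq_mul, ZMod.natCast_self]
    have h1 : psi N c ^ N = 1 := by rw [← psi_nsmul, hNc, psi_zero]
    rw [h1, sub_self, zero_div]

lemma sum_psi_pair (d₁ d₂ : ZMod N) :
    ∑ r : ZMod N × ZMod N, psi N (r.1 * d₁ + r.2 * d₂)
      = if d₁ = 0 ∧ d₂ = 0 then ((N : ℂ)) ^ 2 else 0 := by
  rw [Fintype.sum_prod_type]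
  simp_rw [psi_add]
  rw [← Finset.sum_mul_sum]
  rw [sum_psi_mul, sum_psi_mul]
  by_cases h1 : d₁ = 0 <;> by_cases h2 : d₂ = 0 <;> simp [h1, h2, sq]


end Character

section Operator
variable {m n p : Type*} [Fintype m] [Fintype n] [Fintype p]
  [DecidableEq m] [DecidableEq n] [DecidableEq p]


  [DecidableEq m] [DecidableEq n] [DecidableEq p]

lemma toEuclideanLin_mul (A : Matrix m n ℂ) (B : Matrix n p ℂ) :
    Matrix.toEuclideanLin (A * B)
      = (Matrix.toEuclideanLin A).comp (Matrix.toEuclideanLin B) := by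
  apply LinearMap.ext; intro x
  simp [Matrix.toEuclideanLin_apply, Matrix.mulVec_mulVec]

lemma toEuclideanLin_one : Matrix.toEuclideanLin (1 : Matrix m m ℂ) = LinearMap.id := by
  apply LinearMap.ext; intro x
  simp [Matrix.toEuclideanLin_apply, Matrix.one_mulVec]

lemma toEuclideanLin_apply' (M : Matrix m n ℂ) (x : EuclideanSpace ℂ n) (i : m) :
    Matrix.toEuclideanLin M x i = ∑ j, M i j * x j := by
  simp [Matrix.toEuclideanLin_apply, Matrix.mulVec, dotProduct]

noncomputable def unitaryIso (P : Matrix m m ℂ) (h1 : P * Pᴴ = 1) :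
    EuclideanSpace ℂ m ≃ₗᵢ[ℂ] EuclideanSpace ℂ m where
  toLinearEquiv := LinearEquiv.ofLinear (Matrix.toEuclideanLin P) (Matrix.toEuclideanLin Pᴴ)
    (by rw [← toEuclideanLin_mul, h1, toEuclideanLin_one])
    (by rw [← toEuclideanLin_mul, mul_eq_one_comm.mp h1, toEuclideanLin_one])
  norm_map' := by
    intro x
    show ‖Matrix.toEuclideanLin P x‖ = ‖x‖
    have h2 : Pᴴ * P = 1 := mul_eq_one_comm.mp h1
    have key : (inner ℂ (Matrix.toEuclideanLin P x) (Matrix.toEuclideanLin P x) : ℂ)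
        = inner ℂ x x := by
      have hadj : (inner ℂ (Matrix.toEuclideanLin Pᴴ (Matrix.toEuclideanLin P x)) x : ℂ)
          = inner ℂ (Matrix.toEuclideanLin P x) (Matrix.toEuclideanLin P x) := by
        rw [Matrix.toEuclideanLin_conjTranspose_eq_adjoint, LinearMap.adjoint_inner_left]
      rw [← hadj, ← LinearMap.comp_apply, ← toEuclideanLin_mul, h2, toEuclideanLin_one,
        LinearMap.id_apply]
    have hsq' : ‖Matrix.toEuclideanLin P x‖ ^ 2 = ‖x‖ ^ 2 := by
      rw [inner_self_eq_norm_sq_to_K, inner_self_eq_norm_sq_to_K] at key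
      exact_mod_cast key
    have := congrArg Real.sqrt hsq'
    rwa [Real.sqrt_sq (norm_nonneg _), Real.sqrt_sq (norm_nonneg _)] at this

lemma spectralNorm_unitary_conj (P : Matrix m m ℂ) (Q : Matrix n n ℂ)
    (hP : P * Pᴴ = 1) (hQ : Q * Qᴴ = 1) (A : Matrix m n ℂ) :
    matSpectralNorm (P * A * Q) = matSpectralNorm A := by
  have hcomp : LinearMap.toContinuousLinearMap (Matrix.toEuclideanLin (P * A * Q))
      = ((unitaryIso P hP).toLinearIsometry.toContinuousLinearMap).comp
          ((LinearMap.toContinuousLinearMap (Matrix.toEuclideanLin A)).comp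
            (unitaryIso Q hQ).toLinearIsometry.toContinuousLinearMap) := by
    refine ContinuousLinearMap.ext fun x => ?_
    show Matrix.toEuclideanLin (P * A * Q) x
      = Matrix.toEuclideanLin P (Matrix.toEuclideanLin A (Matrix.toEuclideanLin Q x))
    rw [Matrix.mul_assoc, toEuclideanLin_mul, toEuclideanLin_mul]
    rfl
  rw [matSpectralNorm, hcomp, LinearIsometry.norm_toContinuousLinearMap_comp,
    show (unitaryIso Q hQ).toLinearIsometry.toContinuousLinearMap
      = ((unitaryIso Q hQ).toContinuousLinearEquiv :
          EuclideanSpace ℂ n →L[ℂ] EuclideanSpace ℂ n) from rfl,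
    ContinuousLinearMap.opNorm_comp_linearIsometryEquiv]
  rfl

lemma eucl_norm_sq {α : Type*} [Fintype α] (y : EuclideanSpace ℂ α) :
    ‖y‖ ^ 2 = ∑ i, ‖y i‖ ^ 2 := by
  rw [EuclideanSpace.norm_eq, Real.sq_sqrt]
  positivity






lemma le_of_sq_le_sq {x y : ℝ} (hy : 0 ≤ y) (h : x ^ 2 ≤ y ^ 2) (hx : 0 ≤ x) : x ≤ y := by
  have := Real.sqrt_le_sqrt h
  rwa [Real.sqrt_sq hx, Real.sqrt_sq hy] at this

lemma spectralNorm_blockDiag {κ : Type*} [Fintype κ] [DecidableEq κ] [Nonempty κ]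
    (B : κ → Matrix m n ℂ) :
    matSpectralNorm (Matrix.of fun (p : m × κ) (q : n × κ) =>
        if p.2 = q.2 then B p.2 p.1 q.1 else 0)
      = ⨆ k, matSpectralNorm (B k) := by
  classical
  set D : Matrix (m × κ) (n × κ) ℂ := Matrix.of fun (p : m × κ) (q : n × κ) =>
      if p.2 = q.2 then B p.2 p.1 q.1 else 0 with hD
  have hbdd : BddAbove (Set.range fun k => matSpectralNorm (B k)) :=
    Set.Finite.bddAbove (Set.finite_range _)
  refine le_antisymm ?_ ?_
  · have hC0 : 0 ≤ ⨆ k, matSpectralNorm (B k) :=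
      le_ciSup_of_le hbdd (Classical.arbitrary κ) (norm_nonneg _)
    refine ContinuousLinearMap.opNorm_le_bound _ hC0 fun x => ?_
    set C := ⨆ k, matSpectralNorm (B k) with hC
    set xk : κ → EuclideanSpace ℂ n := fun k => WithLp.toLp 2 (fun j => x (j, k)) with hxk
    have happ : ∀ (i : m) (k : κ),
        Matrix.toEuclideanLin D x (i, k)
          = Matrix.toEuclideanLin (B k) (xk k) i := by
      intro i k
      rw [toEuclideanLin_apply', toEuclideanLin_apply', Fintype.sum_prod_type]
      refine Finset.sum_congr rfl fun j _ => ?_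
      simp [hD, hxk, ite_mul]
    have hx2 : ∑ k, ‖xk k‖ ^ 2 = ‖x‖ ^ 2 := by
      rw [eucl_norm_sq x, Fintype.sum_prod_type]
      rw [Finset.sum_comm]
      refine Finset.sum_congr rfl fun k _ => ?_
      rw [eucl_norm_sq]
    have hnorm : ‖Matrix.toEuclideanLin D x‖ ^ 2
        = ∑ k, ‖Matrix.toEuclideanLin (B k) (xk k)‖ ^ 2 := by
      rw [eucl_norm_sq, Fintype.sum_prod_type, Finset.sum_comm]
      refine Finset.sum_congr rfl fun k _ => ?_
      rw [eucl_norm_sq]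
      exact Finset.sum_congr rfl fun i _ => by rw [happ]
    have hbound : ‖Matrix.toEuclideanLin D x‖ ^ 2 ≤ (C * ‖x‖) ^ 2 := by
      rw [hnorm, mul_pow]
      calc ∑ k, ‖Matrix.toEuclideanLin (B k) (xk k)‖ ^ 2
          ≤ ∑ k, C ^ 2 * ‖xk k‖ ^ 2 := by
            refine Finset.sum_le_sum fun k _ => ?_
            have h1 : ‖Matrix.toEuclideanLin (B k) (xk k)‖
                ≤ C * ‖xk k‖ := by
              refine le_trans ((LinearMap.toContinuousLinearMap
                (Matrix.toEuclideanLin (B k))).le_opNorm _) ?_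
              exact mul_le_mul_of_nonneg_right (le_ciSup hbdd k) (norm_nonneg _)
            calc ‖Matrix.toEuclideanLin (B k) (xk k)‖ ^ 2
                ≤ (C * ‖xk k‖) ^ 2 :=
                  pow_le_pow_left₀ (norm_nonneg _) h1 2
              _ = C ^ 2 * ‖xk k‖ ^ 2 := by ring
        _ = C ^ 2 * ∑ k, ‖xk k‖ ^ 2 := by
            rw [Finset.mul_sum]
        _ = C ^ 2 * ‖x‖ ^ 2 := by rw [hx2]
    exact le_of_sq_le_sq (by positivity) hbound (norm_nonneg _)
  · refine ciSup_le fun k => ?_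
    refine ContinuousLinearMap.opNorm_le_bound _ (norm_nonneg _) fun y => ?_
    set x : EuclideanSpace ℂ (n × κ) := WithLp.toLp 2 (fun q : n × κ => if q.2 = k then y q.1 else 0) with hx
    have hxnorm : ‖x‖ = ‖y‖ := by
      have hsq : ‖x‖ ^ 2 = ‖y‖ ^ 2 := by
        rw [eucl_norm_sq, eucl_norm_sq, Fintype.sum_prod_type, Finset.sum_comm]
        have h1 : ∀ k' : κ, (∑ j, ‖x (j, k')‖ ^ 2)
            = if k' = k then ∑ j, ‖y j‖ ^ 2 else 0 := by
          intro k'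
          split_ifs with h
          · subst h; refine Finset.sum_congr rfl fun j _ => by simp [hx]
          · refine Finset.sum_eq_zero fun j _ => by simp [hx, h]
        simp_rw [h1]
        simp
      have := congrArg Real.sqrt hsq
      rwa [Real.sqrt_sq (norm_nonneg _), Real.sqrt_sq (norm_nonneg _)] at this
    have happ2 : ∀ (i : m) (k' : κ),
        Matrix.toEuclideanLin D x (i, k')
          = if k' = k then Matrix.toEuclideanLin (B k) y i else 0 := by
      intro i k'
      rw [toEuclideanLin_apply', Fintype.sum_prod_type]
      split_ifs with h
      · subst h
        rw [toEuclideanLin_apply']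
        refine Finset.sum_congr rfl fun j _ => ?_
        simp [hD, hx, ite_mul]
      · refine Finset.sum_eq_zero fun j _ => Finset.sum_eq_zero fun k'' _ => ?_
        simp only [hD, hx, Matrix.of_apply]
        rcases eq_or_ne k' k'' with h2 | h2
        · subst h2; simp [h]
        · simp [h2]
    have hDx : ‖Matrix.toEuclideanLin D x‖ ^ 2 = ‖Matrix.toEuclideanLin (B k) y‖ ^ 2 := by
      rw [eucl_norm_sq, eucl_norm_sq, Fintype.sum_prod_type, Finset.sum_comm]
      have h1 : ∀ k' : κ, (∑ i, ‖Matrix.toEuclideanLin D x (i, k')‖ ^ 2)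
          = if k' = k then ∑ i, ‖Matrix.toEuclideanLin (B k) y i‖ ^ 2 else 0 := by
        intro k'
        split_ifs with h
        · subst h; refine Finset.sum_congr rfl fun i _ => by rw [happ2]; simp
        · refine Finset.sum_eq_zero fun i _ => by rw [happ2]; simp [h]
      simp_rw [h1]
      simp
    have h2 : ‖Matrix.toEuclideanLin D x‖ = ‖Matrix.toEuclideanLin (B k) y‖ := by
      have h3 := congrArg Real.sqrt hDx
      rwa [Real.sqrt_sq (norm_nonneg _), Real.sqrt_sq (norm_nonneg _)] at h3
    show ‖Matrix.toEuclideanLin (B k) y‖ ≤ matSpectralNorm D * ‖y‖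
    rw [← h2, ← hxnorm]
    exact (LinearMap.toContinuousLinearMap (Matrix.toEuclideanLin D)).le_opNorm x
  

end Operator

section Main
variable {N : ℕ} [NeZero N]





noncomputable def Wmat (N : ℕ) : Matrix (ZMod N × ZMod N) (ZMod N × ZMod N) ℂ :=
  Matrix.of fun k m => psi N (k.1 * m.1 + k.2 * m.2) / N

noncomputable def Pmat (N : ℕ) (β : Type*) [DecidableEq β] :
    Matrix (β × (ZMod N × ZMod N)) (β × (ZMod N × ZMod N)) ℂ :=
  Matrix.of fun p q => if p.1 = q.1 then Wmat N p.2 q.2 else 0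

lemma star_Wmat (k r : ZMod N × ZMod N) :
    star (Wmat N k r) = psi N (-(k.1 * r.1 + k.2 * r.2)) / N := by
  rw [Wmat, Matrix.of_apply, star_div₀, psi_neg, star_natCast]
  rfl

lemma Wmat_ortho (k m : ZMod N × ZMod N) :
    ∑ r : ZMod N × ZMod N, Wmat N k r * star (Wmat N m r)
      = if k = m then 1 else 0 := by
  have hN : (N : ℂ) ≠ 0 := Nat.cast_ne_zero.2 (NeZero.ne N)
  have key : ∀ r : ZMod N × ZMod N,
      Wmat N k r * star (Wmat N m r)
        = psi N (r.1 * (k.1 - m.1) + r.2 * (k.2 - m.2)) / (N : ℂ) ^ 2 := by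
    intro r
    rw [star_Wmat, Wmat, Matrix.of_apply, div_mul_div_comm, ← psi_add, ← sq]
    congr 2
    ring
  simp_rw [key]
  rw [← Finset.sum_div, sum_psi_pair]
  have hcond : (k.1 - m.1 = 0 ∧ k.2 - m.2 = 0) ↔ k = m := by
    rw [sub_eq_zero, sub_eq_zero, Prod.ext_iff]
  by_cases h : k = m
  · rw [if_pos (hcond.mpr h), if_pos h, div_self (pow_ne_zero 2 hN)]
  · rw [if_neg fun hc => h (hcond.mp hc), if_neg h, zero_div]

lemma Pmat_unitary (β : Type*) [Fintype β] [DecidableEq β] :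
    Pmat N β * (Pmat N β)ᴴ = 1 := by
  ext ⟨i, k⟩ ⟨j, m⟩
  rw [Matrix.mul_apply, Fintype.sum_prod_type]
  simp only [Pmat, Matrix.conjTranspose_apply, Matrix.of_apply]
  rcases eq_or_ne i j with hij | hij
  · subst hij
    have h1 : ∀ (r1 : β) (r2 : ZMod N × ZMod N),
        (if i = r1 then Wmat N k r2 else 0) * star (if i = r1 then Wmat N m r2 else 0)
          = if i = r1 then Wmat N k r2 * star (Wmat N m r2) else 0 := by
      intro r1 r2; split_ifs <;> first | rfl | simp
    simp_rw [h1]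
    have h2 : ∀ r1 : β, (∑ r2 : ZMod N × ZMod N,
        if i = r1 then Wmat N k r2 * star (Wmat N m r2) else 0)
          = if i = r1 then ∑ r2 : ZMod N × ZMod N, Wmat N k r2 * star (Wmat N m r2) else 0 := by
      intro r1; split_ifs <;> simp
    simp_rw [h2]
    rw [Finset.sum_ite_eq, if_pos (Finset.mem_univ i), Wmat_ortho]
    simp [Matrix.one_apply, Prod.ext_iff]
  · have h0 : ∀ (r1 : β) (r2 : ZMod N × ZMod N),
        (if i = r1 then Wmat N k r2 else 0) * star (if j = r1 then Wmat N m r2 else 0) = 0 := by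
      intro r1 r2
      rcases eq_or_ne i r1 with h | h
      · rcases eq_or_ne j r1 with h2 | h2
        · exact absurd (h.trans h2.symm) hij
        · rw [if_neg h2, star_zero, mul_zero]
      · rw [if_neg h, zero_mul]
    simp_rw [h0]
    simp [Matrix.one_apply, Prod.ext_iff, hij]









noncomputable def Bt (N : ℕ) [NeZero N] {a b : ℕ} (v : Fin b → Fin a → ZMod N × ZMod N → ℂ)
    (nn : ZMod N × ZMod N) : Matrix (Fin b) (Fin a) ℂ :=
  Matrix.of fun i j => ∑ t : ZMod N × ZMod N, psi N (-(t.1 * nn.1 + t.2 * nn.2)) * v i j t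


lemma key_identity (v : Fin b → Fin a → ZMod N × ZMod N → ℂ) :
    (Matrix.of fun (r : Fin b × ZMod N × ZMod N) (c : Fin a × ZMod N × ZMod N) =>
        v r.1 c.1 (c.2 - r.2))
      = (Pmat N (Fin b))ᴴ * (Matrix.of fun (p : Fin b × (ZMod N × ZMod N))
            (q : Fin a × (ZMod N × ZMod N)) =>
          if p.2 = q.2 then Bt N v p.2 p.1 q.1 else 0) * Pmat N (Fin a) := by
  have hN : (N : ℂ) ≠ 0 := Nat.cast_ne_zero.2 (NeZero.ne N)
  ext ⟨i, n⟩ ⟨j, m⟩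
  rw [Matrix.mul_apply]
  have hPD : ∀ q : Fin a × (ZMod N × ZMod N),
      ((Pmat N (Fin b))ᴴ * (Matrix.of fun (p : Fin b × (ZMod N × ZMod N))
            (q : Fin a × (ZMod N × ZMod N)) =>
          if p.2 = q.2 then Bt N v p.2 p.1 q.1 else 0)) (i, n) q
        = star (Wmat N q.2 n) * Bt N v q.2 i q.1 := by
    intro q
    rw [Matrix.mul_apply, Fintype.sum_prod_type]
    simp only [Pmat, Matrix.conjTranspose_apply, Matrix.of_apply]
    have h1 : ∀ (i' : Fin b) (k : ZMod N × ZMod N),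
        star (if i' = i then Wmat N k n else 0)
            * (if k = q.2 then Bt N v k i' q.1 else 0)
          = if i' = i then (if k = q.2 then star (Wmat N k n) * Bt N v k i' q.1 else 0)
            else 0 := by
      intro i' k
      split_ifs <;> simp
    simp_rw [h1]
    have h2 : ∀ i' : Fin b,
        (∑ k : ZMod N × ZMod N,
            if i' = i then (if k = q.2 then star (Wmat N k n) * Bt N v k i' q.1 else 0) else 0)
          = if i' = i then star (Wmat N q.2 n) * Bt N v q.2 i' q.1 else 0 := by
      intro i'
      split_ifs with h
      · rw [Finset.sum_ite_eq' univ q.2]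
        simp
      · simp
    simp_rw [h2]
    rw [Finset.sum_ite_eq' univ i]
    simp
  simp_rw [hPD]
  rw [Fintype.sum_prod_type]
  simp only [Pmat, Matrix.of_apply, mul_ite, mul_zero]
  have hpull : ∀ j' : Fin a,
      (∑ k' : ZMod N × ZMod N,
          if j' = j then star (Wmat N k' n) * Bt N v k' i j' * Wmat N k' m else 0)
        = if j' = j
          then ∑ k' : ZMod N × ZMod N, star (Wmat N k' n) * Bt N v k' i j * Wmat N k' m
          else 0 := by
    intro j'
    split_ifs with h
    · subst h; rfl
    · simp
  simp_rw [hpull]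
  rw [Finset.sum_ite_eq' univ j]
  simp only [Finset.mem_univ, if_true, Matrix.of_apply]
  have hterm : ∀ k' : ZMod N × ZMod N,
      star (Wmat N k' n) * Bt N v k' i j * Wmat N k' m
        = ∑ t : ZMod N × ZMod N,
            psi N (k'.1 * (m.1 - n.1 - t.1) + k'.2 * (m.2 - n.2 - t.2)) / (N : ℂ) ^ 2
              * v i j t := by
    intro k'
    rw [star_Wmat, Bt, Matrix.of_apply, Wmat, Matrix.of_apply]
    rw [Finset.mul_sum, Finset.sum_mul]
    refine Finset.sum_congr rfl fun t _ => ?_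
    have hpsi : psi N (-(k'.1 * n.1 + k'.2 * n.2)) * psi N (-(t.1 * k'.1 + t.2 * k'.2))
          * psi N (k'.1 * m.1 + k'.2 * m.2)
        = psi N (k'.1 * (m.1 - n.1 - t.1) + k'.2 * (m.2 - n.2 - t.2)) := by
      rw [← psi_add, ← psi_add]
      congr 1
      ring
    rw [← hpsi]
    field_simp
  simp_rw [hterm]
  rw [Finset.sum_comm]
  have hsum : ∀ t : ZMod N × ZMod N,
      (∑ k' : ZMod N × ZMod N,
          psi N (k'.1 * (m.1 - n.1 - t.1) + k'.2 * (m.2 - n.2 - t.2)) / (N : ℂ) ^ 2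
            * v i j t)
        = (if t = m - n then 1 else 0) * v i j t := by
    intro t
    rw [← Finset.sum_mul, ← Finset.sum_div, sum_psi_pair]
    have hcond : (m.1 - n.1 - t.1 = 0 ∧ m.2 - n.2 - t.2 = 0) ↔ t = m - n := by
      rw [sub_eq_zero, sub_eq_zero, Prod.ext_iff]
      simp [eq_comm]
    congr 1
    by_cases h : t = m - n
    · rw [if_pos (hcond.mpr h), if_pos h, div_self (pow_ne_zero 2 hN)]
    · rw [if_neg fun hc => h (hcond.mp hc), if_neg h, zero_div]
  simp_rw [hsum]
  simp [ite_mul, Finset.sum_ite_eq']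

lemma Bt_eq (v : Fin b → Fin a → ZMod N × ZMod N → ℂ) (nn : ZMod N × ZMod N) :
    (Matrix.of fun (i : Fin b) (j : Fin a) =>
        ∑ k₁ ∈ Finset.range N, ∑ k₂ ∈ Finset.range N,
          Complex.exp (-2 * (π : ℂ) * Complex.I
              * ((k₁ : ℂ) * (nn.1.val : ℂ) + (k₂ : ℂ) * (nn.2.val : ℂ)) / (N : ℂ))
            * v i j (((k₁ : ℕ) : ZMod N), ((k₂ : ℕ) : ZMod N)))
      = Bt N v nn := by
  ext i j
  rw [Matrix.of_apply, Bt, Matrix.of_apply]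
  have hexp : ∀ k₁ k₂ : ℕ,
      Complex.exp (-2 * (π : ℂ) * Complex.I
          * ((k₁ : ℂ) * (nn.1.val : ℂ) + (k₂ : ℂ) * (nn.2.val : ℂ)) / (N : ℂ))
        = psi N (-((k₁ : ZMod N) * nn.1 + (k₂ : ZMod N) * nn.2)) := by
    intro k₁ k₂
    have h1 : -2 * (π : ℂ) * Complex.I
          * ((k₁ : ℂ) * (nn.1.val : ℂ) + (k₂ : ℂ) * (nn.2.val : ℂ)) / (N : ℂ)
        = (starRingEnd ℂ) (2 * (π : ℂ) * Complex.I
            * ((k₁ * nn.1.val + k₂ * nn.2.val : ℕ) : ℂ) / N) := by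
      simp only [map_div₀, _root_.map_mul, map_ofNat, Complex.conj_I, Complex.conj_ofReal,
        map_natCast]
      push_cast
      ring
    have h2 : ((k₁ * nn.1.val + k₂ * nn.2.val : ℕ) : ZMod N)
        = (k₁ : ZMod N) * nn.1 + (k₂ : ZMod N) * nn.2 := by
      push_cast
      simp [ZMod.natCast_val, ZMod.cast_id]
    rw [h1, Complex.exp_conj, psi_natCast, h2, psi_neg]
  simp_rw [hexp]
  have hinner : ∀ k₁ : ℕ,
      (∑ k₂ ∈ Finset.range N,
          psi N (-((k₁ : ZMod N) * nn.1 + ((k₂ : ℕ) : ZMod N) * nn.2))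
            * v i j ((k₁ : ZMod N), ((k₂ : ℕ) : ZMod N)))
        = ∑ y : ZMod N,
            psi N (-((k₁ : ZMod N) * nn.1 + y * nn.2)) * v i j ((k₁ : ZMod N), y) := fun k₁ =>
    sum_zmod (fun y => psi N (-((k₁ : ZMod N) * nn.1 + y * nn.2)) * v i j ((k₁ : ZMod N), y))
  simp_rw [hinner]
  rw [sum_zmod (fun x => ∑ y : ZMod N, psi N (-(x * nn.1 + y * nn.2)) * v i j (x, y))]
  exact (Fintype.sum_prod_type
    (f := fun t : ZMod N × ZMod N => psi N (-(t.1 * nn.1 + t.2 * nn.2)) * v i j t)).symm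


end Main

end Stmt7Aux

/-- the Fourier block-diagonalization identity, equation (20) in the proof
of Theorem 3.3: the block matrix of 2d circulant blocks (block `(i,j)` having entry
`v_{ij} (m - n)` in position `(n, m)`) has spectral norm equal to the maximum over
frequencies `n = (n₁, n₂)` of the spectral norms of the `b × a` Fourier block matrices
`B̃_n` with entries `(B̃_n)_{ij} = Σ_{k₁,k₂=0}^{N-1} exp(-2πi(k₁n₁ + k₂n₂)/N) v_{ij}(k₁,k₂)`. -/
theorem stmt7 (N a b : ℕ) [NeZero N] (ha : 0 < a) (hb : 0 < b)
    (v : Fin b → Fin a → ZMod N × ZMod N → ℂ) :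
    matSpectralNorm (Matrix.of fun (r : Fin b × ZMod N × ZMod N) (c : Fin a × ZMod N × ZMod N) =>
        v r.1 c.1 (c.2 - r.2))
      = ⨆ n : ZMod N × ZMod N,
          matSpectralNorm (Matrix.of fun (i : Fin b) (j : Fin a) =>
            ∑ k₁ ∈ Finset.range N, ∑ k₂ ∈ Finset.range N,
              Complex.exp (-2 * (π : ℂ) * Complex.I
                  * ((k₁ : ℂ) * (n.1.val : ℂ) + (k₂ : ℂ) * (n.2.val : ℂ)) / (N : ℂ))
                * v i j (((k₁ : ℕ) : ZMod N), ((k₂ : ℕ) : ZMod N))) := by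
  open Matrix Stmt7Aux in
  have h1 : (Pmat N (Fin b))ᴴ * ((Pmat N (Fin b))ᴴ)ᴴ = 1 := by
    rw [Matrix.conjTranspose_conjTranspose]
    exact mul_eq_one_comm.mp (Pmat_unitary (N := N) (Fin b))
  rw [Stmt7Aux.key_identity v,
    Stmt7Aux.spectralNorm_unitary_conj _ _ h1 (Stmt7Aux.Pmat_unitary (N := N) (Fin a)) _,
    Stmt7Aux.spectralNorm_blockDiag (Stmt7Aux.Bt N v)]
  exact iSup_congr fun nn => (congrArg matSpectralNorm (Stmt7Aux.Bt_eq v nn)).symm
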